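/- arXiv:1702.06548 — 3 statements merged into one kernel-verified Lean document; each statement's English description precedes it below -/
import Mathlib

section
/- In a simple undirected graph G with edge set E and feedback edge set F (a set of edges whose removal makes G acyclic), every triangle of G that uses at least one edge not in F contains an edge of the form {v, p(v)} in the rooted forest G - F, and the number of such triangles is at most 2|F|. -/
open Finset in
private lemma feedback_key {V : Type*} [Fintype V] [DecidableEq V] (G : SimpleGraph V)
    (F : Set (Sym2 V))
    (hforest : (G.deleteEdges F).IsAcyclic)
    (p : V → V)
    (hp : ∀ a b : V, (G.deleteEdges F).Adj a b → p a = b ∨ p b = a)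
    (t : Finset V) (ht : G.IsNClique 3 t)
    (he : ∃ a ∈ t, ∃ b ∈ t, G.Adj a b ∧ s(a, b) ∉ F) :
    ∃ x y, s(x,y) ∈ F ∧ t = ({x, y, p x} : Finset V) := by
  classical
  obtain ⟨a, ha, b, hb, hab, habF⟩ := he
  have hane : a ≠ b := hab.ne
  obtain ⟨u, v, w, huv, huw, hvw, htuvw⟩ := Finset.card_eq_three.mp ht.card_eq
  obtain ⟨c, hca, hcb, htabc⟩ : ∃ c, c ≠ a ∧ c ≠ b ∧ t = {a, b, c} := by
    subst htuvw
    simp only [Finset.mem_insert, Finset.mem_singleton] at ha hb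
    rcases ha with rfl|rfl|rfl <;> rcases hb with rfl|rfl|rfl <;>
      first
        | exact absurd rfl hane
        | exact ⟨u, by tauto, by tauto, by ext i; simp only [Finset.mem_insert, Finset.mem_singleton]; all_goals tauto⟩
        | exact ⟨v, by tauto, by tauto, by ext i; simp only [Finset.mem_insert, Finset.mem_singleton]; all_goals tauto⟩
        | exact ⟨w, by tauto, by tauto, by ext i; simp only [Finset.mem_insert, Finset.mem_singleton]; all_goals tauto⟩
  subst htabc
  have hclique := ht.isClique
  have hcmem : c ∈ ({a, b, c} : Finset V) := by simp
  have hac : G.Adj a c := hclique ha hcmem (Ne.symm hca)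
  have hbc : G.Adj b c := hclique hb hcmem (Ne.symm hcb)
  have hfab : (G.deleteEdges F).Adj a b := by
    rw [SimpleGraph.deleteEdges_adj]; exact ⟨hab, habF⟩
  -- a triangle cannot be fully in the forest
  have hnot : ¬ (s(a,c) ∉ F ∧ s(b,c) ∉ F) := by
    rintro ⟨h1, h2⟩
    have fbc : (G.deleteEdges F).Adj b c := by
      rw [SimpleGraph.deleteEdges_adj]; exact ⟨hbc, h2⟩
    have fca : (G.deleteEdges F).Adj c a := by
      rw [SimpleGraph.deleteEdges_adj]
      exact ⟨hac.symm, by rwa [Sym2.eq_swap]⟩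
    refine hforest (SimpleGraph.Walk.cons hfab (SimpleGraph.Walk.cons fbc
      (SimpleGraph.Walk.cons fca SimpleGraph.Walk.nil))) ?_
    simp [SimpleGraph.Walk.isCycle_def, SimpleGraph.Walk.isTrail_def,
      hfab.ne, fbc.ne, fca.ne, hfab.ne', fbc.ne', fca.ne', Sym2.eq_iff]
  rcases hp a b hfab with hpa | hpb
  · by_cases h1 : s(a,c) ∈ F
    · exact ⟨a, c, h1, by rw [hpa]; ext i; simp only [Finset.mem_insert, Finset.mem_singleton]; all_goals tauto⟩
    · have fac : (G.deleteEdges F).Adj a c := by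
        rw [SimpleGraph.deleteEdges_adj]; exact ⟨hac, h1⟩
      have hpc : p c = a := by
        rcases hp a c fac with h | h
        · exact absurd (hpa ▸ h) (Ne.symm hcb)
        · exact h
      have h2 : s(b,c) ∈ F := by by_contra h2; exact hnot ⟨h1, h2⟩
      exact ⟨c, b, by rwa [Sym2.eq_swap], by rw [hpc]; ext i; simp only [Finset.mem_insert, Finset.mem_singleton]; all_goals tauto⟩
  · by_cases h2 : s(b,c) ∈ F
    · exact ⟨b, c, h2, by rw [hpb]; ext i; simp only [Finset.mem_insert, Finset.mem_singleton]; all_goals tauto⟩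
    · have fbc : (G.deleteEdges F).Adj b c := by
        rw [SimpleGraph.deleteEdges_adj]; exact ⟨hbc, h2⟩
      have hpc : p c = b := by
        rcases hp b c fbc with h | h
        · exact absurd (hpb ▸ h) (Ne.symm hca)
        · exact h
      have h1 : s(a,c) ∈ F := by by_contra h1; exact hnot ⟨h1, h2⟩
      exact ⟨c, a, by rwa [Sym2.eq_swap], by rw [hpc]; ext i; simp only [Finset.mem_insert, Finset.mem_singleton]; all_goals tauto⟩

theorem feedback_edge_triangles {V : Type*} [Fintype V] (G : SimpleGraph V)
    (F : Set (Sym2 V)) (hF : F ⊆ G.edgeSet)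
    (hforest : (G.deleteEdges F).IsAcyclic)
    (p : V → V)
    (hp : ∀ a b : V, (G.deleteEdges F).Adj a b → p a = b ∨ p b = a) :
    (∀ t : Finset V, G.IsNClique 3 t →
      (∃ a ∈ t, ∃ b ∈ t, G.Adj a b ∧ s(a, b) ∉ F) →
      ∃ v ∈ t, p v ∈ t ∧ (G.deleteEdges F).Adj v (p v)) ∧
    {t : Finset V | G.IsNClique 3 t ∧
      ∃ a ∈ t, ∃ b ∈ t, G.Adj a b ∧ s(a, b) ∉ F}.ncard ≤ 2 * F.ncard := by
  classical
  constructor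
  · rintro t ht ⟨a, ha, b, hb, hab, habF⟩
    have hfab : (G.deleteEdges F).Adj a b := by
      rw [SimpleGraph.deleteEdges_adj]; exact ⟨hab, habF⟩
    rcases hp a b hfab with h | h
    · exact ⟨a, ha, h ▸ hb, h ▸ hfab⟩
    · exact ⟨b, hb, h ▸ ha, h ▸ hfab.symm⟩
  · set S := {t : Finset V | G.IsNClique 3 t ∧
      ∃ a ∈ t, ∃ b ∈ t, G.Adj a b ∧ s(a, b) ∉ F} with hS
    have hfin : F.Finite := Set.toFinite F
    set Ft : Finset (Sym2 V) := hfin.toFinset with hFt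
    have Dsymm : ∀ x y : V, ({({x, y, p x} : Finset V), {x, y, p y}} : Finset (Finset V))
        = {({y, x, p y} : Finset V), {y, x, p x}} := by
      intro x y
      rw [show ({x, y, p x} : Finset V) = {y, x, p x} from Finset.insert_comm x y {p x},
        show ({x, y, p y} : Finset V) = {y, x, p y} from Finset.insert_comm x y {p y},
        Finset.pair_comm]
    set D : Sym2 V → Finset (Finset V) :=
      Sym2.lift ⟨fun x y => ({({x, y, p x} : Finset V), {x, y, p y}} : Finset (Finset V)),
        fun x y => Dsymm x y⟩ with hD
    have hsub : S ⊆ ↑(Ft.biUnion D) := by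
      intro t htS
      obtain ⟨ht, he⟩ := htS
      obtain ⟨x, y, hxyF, rfl⟩ := feedback_key G F hforest p hp t ht he
      rw [Finset.coe_biUnion]
      refine Set.mem_biUnion (show s(x,y) ∈ Ft by simpa [hFt] using hxyF) ?_
      simp [hD, Sym2.lift_mk]
    calc S.ncard ≤ (↑(Ft.biUnion D) : Set (Finset V)).ncard :=
          Set.ncard_le_ncard hsub (Set.toFinite _)
    _ = (Ft.biUnion D).card := Set.ncard_coe_finset _
    _ ≤ ∑ e ∈ Ft, (D e).card := Finset.card_biUnion_le
    _ ≤ ∑ _e ∈ Ft, 2 := by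
        refine Finset.sum_le_sum ?_
        intro e _
        induction e using Sym2.ind with
        | _ x y =>
          simp only [hD, Sym2.lift_mk]
          exact (Finset.card_insert_le _ _).trans (by simp)
    _ = 2 * Ft.card := by rw [Finset.sum_const, smul_eq_mul, mul_comm]
    _ = 2 * F.ncard := by rw [hFt, ← Set.ncard_eq_toFinset_card F hfin]
end

section
/- The number of triangles in a simple undirected graph with m edges is at most m^{3/2}. -/
/-!
The triangles through a vertex `v` inject, by removing `v`, both into the edges of `G` and into
the pairs of neighbours of `v`, so there are at most `min m (d v ^ 2) ≤ d v * √m` of them.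
Summing over `v` counts every triangle three times, and `∑ v, d v = 2 m`, so `3 T ≤ 2 m √m`.
-/

open Finset

lemma le_mul_sqrt_of_le_of_le_sq {t d m : ℝ} (ht : 0 ≤ t) (hd : 0 ≤ d) (htm : t ≤ m)
    (htd : t ≤ d ^ 2) : t ≤ d * √m := by
  rw [← Real.sqrt_sq hd, ← Real.sqrt_mul (sq_nonneg d), Real.le_sqrt ht (by nlinarith)]
  nlinarith

namespace SimpleGraph

variable {V : Type*} [Fintype V] [DecidableEq V] (G : SimpleGraph V) [DecidableRel G.Adj]

lemma card_cliqueFinset_two_le_card_edgeFinset : #(G.cliqueFinset 2) ≤ #G.edgeFinset := by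
  refine card_le_card_of_surjOn Sym2.toFinset fun s hs ↦ ?_
  obtain ⟨hs, hcard⟩ := mem_cliqueFinset_iff.mp hs
  obtain ⟨a, b, hab, rfl⟩ := card_eq_two.mp hcard
  refine ⟨s(a, b), ?_, Sym2.toFinset_mk_eq⟩
  simpa using isClique_pair.mp (by simpa using hs) hab

lemma card_filter_mem_cliqueFinset_succ_le_card_cliqueFinset (n : ℕ) (v : V) :
    #{s ∈ G.cliqueFinset (n + 1) | v ∈ s} ≤ #(G.cliqueFinset n) := by
  refine card_le_card_of_injOn (·.erase v) (fun s hs ↦ ?_) ((erase_injOn' v).mono fun s hs ↦ ?_)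
  · obtain ⟨hs, hv⟩ := mem_filter.mp hs
    exact mem_cliqueFinset_iff.mpr ((mem_cliqueFinset_iff.mp hs).erase_of_mem hv)
  · exact (mem_filter.mp hs).2

lemma card_filter_mem_cliqueFinset_succ_le_choose_degree (n : ℕ) (v : V) :
    #{s ∈ G.cliqueFinset (n + 1) | v ∈ s} ≤ (G.degree v).choose n := by
  rw [← card_neighborFinset_eq_degree, ← card_powersetCard]
  refine card_le_card_of_injOn (·.erase v) (fun s hs ↦ ?_) ((erase_injOn' v).mono fun s hs ↦ ?_)
  · obtain ⟨hs, hv⟩ := mem_filter.mp hs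
    have hs := mem_cliqueFinset_iff.mp hs
    refine mem_powersetCard.mpr ⟨fun u hu ↦ ?_, (hs.erase_of_mem hv).card_eq⟩
    obtain ⟨huv, hu⟩ := mem_erase.mp hu
    exact (mem_neighborFinset _ _ _).mpr (hs.isClique hv hu huv.symm)
  · exact (mem_filter.mp hs).2

lemma sum_card_filter_mem_cliqueFinset (n : ℕ) :
    ∑ v, #{s ∈ G.cliqueFinset n | v ∈ s} = #(G.cliqueFinset n) * n := by
  simp_rw [card_filter]
  rw [sum_comm]
  refine sum_const_nat fun s hs ↦ ?_
  rw [Fintype.sum_extend_by_zero, ← card_eq_sum_ones, (mem_cliqueFinset_iff.mp hs).card_eq]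

lemma card_filter_mem_cliqueFinset_three_le (v : V) :
    (#{s ∈ G.cliqueFinset 3 | v ∈ s} : ℝ) ≤ G.degree v * √(#G.edgeFinset) := by
  refine le_mul_sqrt_of_le_of_le_sq (Nat.cast_nonneg _) (Nat.cast_nonneg _) ?_ ?_
  · exact_mod_cast (G.card_filter_mem_cliqueFinset_succ_le_card_cliqueFinset 2 v).trans
      G.card_cliqueFinset_two_le_card_edgeFinset
  · exact_mod_cast (G.card_filter_mem_cliqueFinset_succ_le_choose_degree 2 v).trans
      (Nat.choose_le_pow _ _)

theorem three_mul_card_cliqueFinset_three_le :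
    3 * (#(G.cliqueFinset 3) : ℝ) ≤ 2 * #G.edgeFinset * √(#G.edgeFinset) :=
  calc 3 * (#(G.cliqueFinset 3) : ℝ)
      = ∑ v, (#{s ∈ G.cliqueFinset 3 | v ∈ s} : ℝ) := by
        rw [mul_comm]; exact_mod_cast (G.sum_card_filter_mem_cliqueFinset 3).symm
    _ ≤ ∑ v, G.degree v * √(#G.edgeFinset) :=
        sum_le_sum fun v _ ↦ G.card_filter_mem_cliqueFinset_three_le v
    _ = 2 * #G.edgeFinset * √(#G.edgeFinset) := by
        rw [← sum_mul, ← Nat.cast_sum, G.sum_degrees_eq_twice_card_edges, Nat.cast_mul, Nat.cast_ofNat]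

end SimpleGraph

theorem triangle_count_bound {V : Type*} [Fintype V] [DecidableEq V]
    (G : SimpleGraph V) [DecidableRel G.Adj] :
    ((G.cliqueFinset 3).card : ℝ) ≤ (G.edgeFinset.card : ℝ) ^ (3 / 2 : ℝ) := by
  have hm : (0 : ℝ) ≤ #G.edgeFinset := Nat.cast_nonneg _
  have hpow : (#G.edgeFinset : ℝ) ^ (3 / 2 : ℝ) = #G.edgeFinset * √(#G.edgeFinset) := by
    rw [Real.sqrt_eq_rpow, ← Real.rpow_one_add' hm (by norm_num)]
    norm_num
  have := G.three_mul_card_cliqueFinset_three_le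
  rw [hpow]
  linarith [mul_nonneg hm (Real.sqrt_nonneg (#G.edgeFinset : ℝ))]
end

section
/- In the graph G' (tripartite blow-up of a nonempty graph G plus ℓ_1,ℓ_2,ℓ_3,r_1,r_2,r_3 as above), the distance between any two vertices is at most 3, i.e., G' has diameter at most 3. -/
/-- Vertex set of the GP-hardness construction: three copies of `V`
(the tripartite blow-up), plus vertices `ℓ₁, ℓ₂, ℓ₃` (left `Fin 3`)
and `r₁, r₂, r₃` (right `Fin 3`). -/
abbrev GPVertex (V : Type*) := (V × Fin 3) ⊕ (Fin 3 ⊕ Fin 3)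

/-- Adjacency relation of the GP-hardness construction:
`(x, i) ~ (y, j)` iff `i ≠ j` and `x ~ y` in `G`;
`ℓᵢ` and `rᵢ` are adjacent to every vertex of copy `i`;
`ℓᵢ ~ r_j` iff `i ≠ j`. -/
def gpRel {V : Type*} (G : SimpleGraph V) : GPVertex V → GPVertex V → Prop
  | .inl x, .inl y => x.2 ≠ y.2 ∧ G.Adj x.1 y.1
  | .inl x, .inr (.inl i) => x.2 = i
  | .inl x, .inr (.inr i) => x.2 = i
  | .inr (.inl i), .inl x => x.2 = i
  | .inr (.inr i), .inl x => x.2 = i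
  | .inr (.inl i), .inr (.inr j) => i ≠ j
  | .inr (.inr i), .inr (.inl j) => i ≠ j
  | .inr (.inl _), .inr (.inl _) => False
  | .inr (.inr _), .inr (.inr _) => False


theorem gp_diameter_le_three {V : Type*} [Nonempty V] (G : SimpleGraph V)
    (G' : SimpleGraph (GPVertex V)) (h : ∀ a b, G'.Adj a b ↔ gpRel G a b) :
    ∀ a b : GPVertex V, ∃ p : G'.Walk a b, p.length ≤ 3 := by
  obtain ⟨x₀⟩ := ‹Nonempty V›
  have third : ∀ i j : Fin 3, ∃ k : Fin 3, k ≠ i ∧ k ≠ j := by decide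
  have A : ∀ a b, gpRel G a b → G'.Adj a b := fun a b pf => (h a b).mpr pf
  rintro (⟨x, i⟩ | (i | i)) (⟨y, j⟩ | (j | j))
  · by_cases hij : i = j
    · subst hij
      exact ⟨.cons (A (.inl (x, i)) (.inr (.inl i)) rfl)
        (.cons (A (.inr (.inl i)) (.inl (y, i)) rfl) .nil), by simp⟩
    · exact ⟨.cons (A (.inl (x, i)) (.inr (.inl i)) rfl)
        (.cons (A (.inr (.inl i)) (.inr (.inr j)) hij)
        (.cons (A (.inr (.inr j)) (.inl (y, j)) rfl) .nil)), by simp⟩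
  · by_cases hij : i = j
    · subst hij
      exact ⟨.cons (A (.inl (x, i)) (.inr (.inl i)) rfl) .nil, by simp⟩
    · exact ⟨.cons (A (.inl (x, i)) (.inr (.inr i)) rfl)
        (.cons (A (.inr (.inr i)) (.inr (.inl j)) hij) .nil), by simp⟩
  · by_cases hij : i = j
    · subst hij
      exact ⟨.cons (A (.inl (x, i)) (.inr (.inr i)) rfl) .nil, by simp⟩
    · exact ⟨.cons (A (.inl (x, i)) (.inr (.inl i)) rfl)
        (.cons (A (.inr (.inl i)) (.inr (.inr j)) hij) .nil), by simp⟩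
  · by_cases hij : j = i
    · subst hij
      exact ⟨.cons (A (.inr (.inl j)) (.inl (y, j)) rfl) .nil, by simp⟩
    · exact ⟨.cons (A (.inr (.inl i)) (.inr (.inr j)) (fun e => hij e.symm))
        (.cons (A (.inr (.inr j)) (.inl (y, j)) rfl) .nil), by simp⟩
  · by_cases hij : i = j
    · subst hij
      exact ⟨.nil, by simp⟩
    · obtain ⟨k, hk1, hk2⟩ := third i j
      exact ⟨.cons (A (.inr (.inl i)) (.inr (.inr k)) (fun e => hk1 e.symm))
        (.cons (A (.inr (.inr k)) (.inr (.inl j)) hk2) .nil), by simp⟩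
  · by_cases hij : i = j
    · subst hij
      exact ⟨.cons (A (.inr (.inl i)) (.inl (x₀, i)) rfl)
        (.cons (A (.inl (x₀, i)) (.inr (.inr i)) rfl) .nil), by simp⟩
    · exact ⟨.cons (A (.inr (.inl i)) (.inr (.inr j)) hij) .nil, by simp⟩
  · by_cases hij : j = i
    · subst hij
      exact ⟨.cons (A (.inr (.inr j)) (.inl (y, j)) rfl) .nil, by simp⟩
    · exact ⟨.cons (A (.inr (.inr i)) (.inr (.inl j)) (fun e => hij e.symm))
        (.cons (A (.inr (.inl j)) (.inl (y, j)) rfl) .nil), by simp⟩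
  · by_cases hij : i = j
    · subst hij
      exact ⟨.cons (A (.inr (.inr i)) (.inl (x₀, i)) rfl)
        (.cons (A (.inl (x₀, i)) (.inr (.inl i)) rfl) .nil), by simp⟩
    · exact ⟨.cons (A (.inr (.inr i)) (.inr (.inl j)) hij) .nil, by simp⟩
  · by_cases hij : i = j
    · subst hij
      exact ⟨.nil, by simp⟩
    · obtain ⟨k, hk1, hk2⟩ := third i j
      exact ⟨.cons (A (.inr (.inr i)) (.inr (.inl k)) (fun e => hk1 e.symm))
        (.cons (A (.inr (.inl k)) (.inr (.inr j)) hk2) .nil), by simp⟩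
end
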